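/- arXiv:math/9801024 — 2 statements merged into one kernel-verified Lean document; each statement's English description precedes it below -/
import Mathlib

section
/- For any matrices A₁, A₂, A₃ in SL(2,C), tr(A₁A₂A₃)·tr(A₁A₃A₂) = tr(A₁)² + tr(A₂)² + tr(A₃)² + tr(A₁A₂)² + tr(A₂A₃)² + tr(A₃A₁)² + tr(A₁A₂)·tr(A₂A₃)·tr(A₃A₁) - tr(A₁)·tr(A₂)·tr(A₁A₂) - tr(A₂)·tr(A₃)·tr(A₂A₃) - tr(A₃)·tr(A₁)·tr(A₃A₁) - 4. -/
theorem trace_identity_9 (A₁ A₂ A₃ : Matrix (Fin 2) (Fin 2) ℂ)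
    (h₁ : A₁.det = 1) (h₂ : A₂.det = 1) (h₃ : A₃.det = 1) :
    (A₁ * A₂ * A₃).trace * (A₁ * A₃ * A₂).trace =
      A₁.trace ^ 2 + A₂.trace ^ 2 + A₃.trace ^ 2 +
        (A₁ * A₂).trace ^ 2 + (A₂ * A₃).trace ^ 2 + (A₃ * A₁).trace ^ 2 +
        (A₁ * A₂).trace * (A₂ * A₃).trace * (A₃ * A₁).trace -
        A₁.trace * A₂.trace * (A₁ * A₂).trace -
        A₂.trace * A₃.trace * (A₂ * A₃).trace -
        A₃.trace * A₁.trace * (A₃ * A₁).trace - 4 := by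
  rw [Matrix.det_fin_two] at h₁ h₂ h₃
  simp only [Matrix.trace_fin_two, Matrix.mul_apply, Fin.sum_univ_two]
  linear_combination
    ((-2) + 1 * A₃ 1 1 * A₃ 1 1 + 1 * A₃ 0 0 * A₃ 0 0 + 1 * A₂ 1 1 * A₂ 1 1 + (-1) * A₂ 1 1 * A₂ 1 1 * A₃ 0 0 * A₃ 1 1 + 1 * A₂ 1 0 * A₂ 1 1 * A₃ 0 1 * A₃ 1 1 + (-1) * A₂ 1 0 * A₂ 1 1 * A₃ 0 0 * A₃ 0 1 + 1 * A₂ 1 0 * A₂ 1 0 * A₃ 0 1 * A₃ 0 1 + 1 * A₂ 0 1 * A₂ 1 1 * A₃ 1 0 * A₃ 1 1 + (-1) * A₂ 0 1 * A₂ 1 1 * A₃ 0 0 * A₃ 1 0 + 1 * A₂ 0 1 * A₂ 0 1 * A₃ 1 0 * A₃ 1 0 + (-1) * A₂ 0 0 * A₂ 1 1 * A₃ 1 1 * A₃ 1 1 + 2 * A₂ 0 0 * A₂ 1 1 * A₃ 0 0 * A₃ 1 1 + (-1) * A₂ 0 0 * A₂ 1 1 * A₃ 0 0 * A₃ 0 0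 + (-1) * A₂ 0 0 * A₂ 1 0 * A₃ 0 1 * A₃ 1 1 + 1 * A₂ 0 0 * A₂ 1 0 * A₃ 0 0 * A₃ 0 1 + (-1) * A₂ 0 0 * A₂ 0 1 * A₃ 1 0 * A₃ 1 1 + 1 * A₂ 0 0 * A₂ 0 1 * A₃ 0 0 * A₃ 1 0 + 1 * A₂ 0 0 * A₂ 0 0 + (-1) * A₂ 0 0 * A₂ 0 0 * A₃ 0 0 * A₃ 1 1) * h₁ +
    ((-2) + 2 * A₃ 0 0 * A₃ 1 1 + 1 * A₁ 1 1 * A₁ 1 1 + (-1) * A₁ 1 1 * A₁ 1 1 * A₃ 0 0 * A₃ 1 1 + 1 * A₁ 1 0 * A₁ 1 1 * A₃ 0 1 * A₃ 1 1 + (-1) * A₁ 1 0 * A₁ 1 1 * A₃ 0 0 * A₃ 0 1 + 1 * A₁ 1 0 * A₁ 1 0 * A₃ 0 1 * A₃ 0 1 + 1 * A₁ 0 1 * A₁ 1 1 * A₃ 1 0 * A₃ 1 1 + (-1) * A₁ 0 1 * A₁ 1 1 * A₃ 0 0 * A₃ 1 0 + (-1) * A₁ 0 1 * A₁ 1 0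 * A₃ 1 1 * A₃ 1 1 + 2 * A₁ 0 1 * A₁ 1 0 * A₃ 0 0 * A₃ 1 1 + (-1) * A₁ 0 1 * A₁ 1 0 * A₃ 0 0 * A₃ 0 0 + 1 * A₁ 0 1 * A₁ 0 1 * A₃ 1 0 * A₃ 1 0 + (-1) * A₁ 0 0 * A₁ 1 0 * A₃ 0 1 * A₃ 1 1 + 1 * A₁ 0 0 * A₁ 1 0 * A₃ 0 0 * A₃ 0 1 + (-1) * A₁ 0 0 * A₁ 0 1 * A₃ 1 0 * A₃ 1 1 + 1 * A₁ 0 0 * A₁ 0 1 * A₃ 0 0 * A₃ 1 0 + 1 * A₁ 0 0 * A₁ 0 0 + (-1) * A₁ 0 0 * A₁ 0 0 * A₃ 0 0 * A₃ 1 1) * h₂ +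
    (2 * A₂ 0 1 * A₂ 1 0 + (-1) * A₁ 1 1 * A₁ 1 1 * A₂ 0 1 * A₂ 1 0 + 1 * A₁ 1 0 * A₁ 1 1 * A₂ 0 1 * A₂ 1 1 + (-1) * A₁ 1 0 * A₁ 1 1 * A₂ 0 0 * A₂ 0 1 + 1 * A₁ 1 0 * A₁ 1 0 * A₂ 0 1 * A₂ 0 1 + 1 * A₁ 0 1 * A₁ 1 1 * A₂ 1 0 * A₂ 1 1 + (-1) * A₁ 0 1 * A₁ 1 1 * A₂ 0 0 * A₂ 1 0 + 2 * A₁ 0 1 * A₁ 1 0 + (-1) * A₁ 0 1 * A₁ 1 0 * A₂ 1 1 * A₂ 1 1 + 2 * A₁ 0 1 * A₁ 1 0 * A₂ 0 1 * A₂ 1 0 + (-1) * A₁ 0 1 * A₁ 1 0 * A₂ 0 0 * A₂ 0 0 + 1 * A₁ 0 1 * A₁ 0 1 * A₂ 1 0 * A₂ 1 0 + (-1) * A₁ 0 0 * A₁ 1 0 * A₂ 0 1 * A₂ 1 1 + 1 * A₁ 0 0 * A₁ 1 0 * A₂ 0 0 * A₂ 0 1 + (-1) * A₁ 0 0 * A₁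 0 1 * A₂ 1 0 * A₂ 1 1 + 1 * A₁ 0 0 * A₁ 0 1 * A₂ 0 0 * A₂ 1 0 + (-1) * A₁ 0 0 * A₁ 0 0 * A₂ 0 1 * A₂ 1 0) * h₃
end

section
/- Suppose real numbers t₁, t₂, t₃, t₄, t₁₂, t₂₃, t₃₁, all ≥ 2, satisfy t₄² + t₄(t₁t₂₃ + t₂t₃₁ + t₃t₁₂ + t₁t₂t₃) + t₁² + t₂² + t₃² + t₁₂² + t₂₃² + t₃₁² + t₁t₂t₁₂ + t₂t₃t₂₃ + t₃t₁t₃₁ − 4 − t₁₂t₂₃t₃₁ = 0, and t₂₃ = max(t₁₂, t₂₃, t₃₁), with t₄ > 2 and t₃₁ ≥ 2 strictly positive products as stated. Then t₁t₃ + 2t₃₁ + t₂t₄ − t₂₃t₁₂ < 0. -/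
theorem side_condition_ineq (t₁ t₂ t₃ t₄ t₁₂ t₂₃ t₃₁ : ℝ)
    (h₁ : 2 ≤ t₁) (h₂ : 2 ≤ t₂) (h₃ : 2 ≤ t₃) (h₄ : 2 < t₄)
    (h₁₂ : 2 ≤ t₁₂) (h₂₃ : 2 ≤ t₂₃) (h₃₁ : 2 ≤ t₃₁)
    (heq : t₄ ^ 2 + t₄ * (t₁ * t₂₃ + t₂ * t₃₁ + t₃ * t₁₂ + t₁ * t₂ * t₃) +
      t₁ ^ 2 + t₂ ^ 2 + t₃ ^ 2 + t₁₂ ^ 2 + t₂₃ ^ 2 + t₃₁ ^ 2 +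
      t₁ * t₂ * t₁₂ + t₂ * t₃ * t₂₃ + t₃ * t₁ * t₃₁ - 4 - t₁₂ * t₂₃ * t₃₁ = 0)
    (hmax : t₂₃ = max t₁₂ (max t₂₃ t₃₁)) :
    t₁ * t₃ + 2 * t₃₁ + t₂ * t₄ - t₂₃ * t₁₂ < 0 := by
  have ht : t₃₁ ≤ t₂₃ := by
    rw [hmax]; exact le_trans (le_max_right _ _) (le_max_right _ _)
  have h0 : (0:ℝ) < t₃₁ := by linarith
  have key : t₃₁ * (t₁ * t₃ + 2 * t₃₁ + t₂ * t₄ - t₂₃ * t₁₂) < 0 := by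
    nlinarith [mul_nonneg (mul_nonneg (by linarith : (0:ℝ) ≤ t₄) (by linarith : (0:ℝ) ≤ t₁)) (by linarith : (0:ℝ) ≤ t₂₃),
      mul_nonneg (mul_nonneg (by linarith : (0:ℝ) ≤ t₄) (by linarith : (0:ℝ) ≤ t₃)) (by linarith : (0:ℝ) ≤ t₁₂),
      mul_nonneg (mul_nonneg (mul_nonneg (by linarith : (0:ℝ) ≤ t₄) (by linarith : (0:ℝ) ≤ t₁)) (by linarith : (0:ℝ) ≤ t₂)) (by linarith : (0:ℝ) ≤ t₃),
      mul_nonneg (mul_nonneg (by linarith : (0:ℝ) ≤ t₁) (by linarith : (0:ℝ) ≤ t₂)) (by linarith : (0:ℝ) ≤ t₁₂),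
      mul_nonneg (mul_nonneg (by linarith : (0:ℝ) ≤ t₂) (by linarith : (0:ℝ) ≤ t₃)) (by linarith : (0:ℝ) ≤ t₂₃),
      sq_nonneg t₁, sq_nonneg t₂, sq_nonneg t₃, sq_nonneg t₁₂,
      mul_le_mul_of_nonneg_left ht (le_of_lt h0),
      mul_self_nonneg (t₂₃ - t₃₁), sq_nonneg (t₄ - 2)]
  nlinarith [key, h0]
end
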